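/- Let X and Y be Polish spaces and let γ be a probability measure on X × Y with marginals μ on X and ν on Y. If the cost function c on X × Y is bounded by marginal costs c_X and c_Y in the sense that c_X(x₁,x₂) ≥ sup_{y ∈ Y} c(x₁,y,x₂,y) and c_Y(y₁,y₂) ≥ sup_{x ∈ X} c(x,y₁,x,y₂) for all x₁,x₂ ∈ X and y₁,y₂ ∈ Y, then the transport dependency satisfies τ_c(γ) ≤ diam_{c_Y} ν, and by symmetry also τ_c(γ) ≤ diam_{c_X} μ. -/

import Mathlib

open MeasureTheory ENNReal Filter Topology

/-- The optimal transport cost between two measures `μ` and `ν` on a space `Z`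
with base cost `c`. -/
noncomputable def otCost {Z : Type*} [MeasurableSpace Z]
    (c : Z → Z → ℝ≥0∞) (μ ν : Measure Z) : ℝ≥0∞ :=
  ⨅ (π : Measure (Z × Z)) (_ : π.map Prod.fst = μ ∧ π.map Prod.snd = ν),
    ∫⁻ p, c p.1 p.2 ∂π

/-- The transport dependency of a measure `γ` on `X × Y`. -/
noncomputable def tdep {X Y : Type*} [MeasurableSpace X] [MeasurableSpace Y]
    (c : X × Y → X × Y → ℝ≥0∞) (γ : Measure (X × Y)) : ℝ≥0∞ :=
  otCost c γ ((γ.map Prod.fst).prod (γ.map Prod.snd))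

/-- The `c`-diameter of a measure `μ`: `diam_c μ = ∫∫ c dμ dμ`. -/
noncomputable def diamC {Z : Type*} [MeasurableSpace Z]
    (c : Z → Z → ℝ≥0∞) (μ : Measure Z) : ℝ≥0∞ :=
  ∫⁻ z₁, ∫⁻ z₂, c z₁ z₂ ∂μ ∂μ

/-!
Couple `γ` with `μ ⊗ ν` by keeping the `X`-coordinate of a `γ`-sample and replacing its
`Y`-coordinate by an independent `ν`-sample. Along this coupling the two points differ only
in their `Y`-coordinates, so the cost is at most `sup_x c((x, y₁), (x, y₂)) ≤ c_Y(y₁, y₂)`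
with `y₁, y₂` independent of law `ν`, and integrating gives `diam_{c_Y} ν`. The fibrewise
supremum is lower semicontinuous, hence measurable, which lets it stand in for the possibly
non-measurable `c_Y`. Resampling the `X`-coordinate instead gives the bound by `diam_{c_X} μ`.
-/

lemma otCost_le_lintegral {Z : Type*} [MeasurableSpace Z] (c : Z → Z → ℝ≥0∞)
    {μ ν : Measure Z} (π : Measure (Z × Z)) (hπ₁ : π.map Prod.fst = μ)
    (hπ₂ : π.map Prod.snd = ν) :
    otCost c μ ν ≤ ∫⁻ p, c p.1 p.2 ∂π :=
  iInf₂_le π ⟨hπ₁, hπ₂⟩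

section Resampling

variable {X Y : Type*} [MeasurableSpace X] [MeasurableSpace Y]
  {c : X × Y → X × Y → ℝ≥0∞} (γ : Measure (X × Y)) [IsProbabilityMeasure γ]

lemma tdep_le_lintegral_resample_snd (hc : Measurable (Function.uncurry c)) :
    tdep c γ ≤ ∫⁻ z, ∫⁻ y, c z (z.1, y) ∂(γ.map Prod.snd) ∂γ := by
  set ν := γ.map Prod.snd
  have : IsProbabilityMeasure ν := Measure.isProbabilityMeasure_map measurable_snd.aemeasurable
  let T : (X × Y) × Y → (X × Y) × (X × Y) := fun q => (q.1, (q.1.1, q.2))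
  have hT : Measurable T :=
    measurable_fst.prodMk ((measurable_fst.comp measurable_fst).prodMk measurable_snd)
  have hπ₁ : ((γ.prod ν).map T).map Prod.fst = γ := by
    rw [Measure.map_map measurable_fst hT]
    exact Measure.fst_prod
  have hπ₂ : ((γ.prod ν).map T).map Prod.snd = (γ.map Prod.fst).prod ν := by
    rw [Measure.map_map measurable_snd hT, ← Measure.map_id (μ := ν),
      Measure.map_prod_map _ _ measurable_fst measurable_id, Measure.map_id]
    rfl
  calc tdep c γ ≤ ∫⁻ p, c p.1 p.2 ∂(γ.prod ν).map T := otCost_le_lintegral c _ hπ₁ hπ₂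
    _ = ∫⁻ q, c q.1 (q.1.1, q.2) ∂(γ.prod ν) := lintegral_map hc hT
    _ = ∫⁻ z, ∫⁻ y, c z (z.1, y) ∂ν ∂γ := lintegral_prod _ (hc.comp hT).aemeasurable

lemma tdep_le_lintegral_resample_fst (hc : Measurable (Function.uncurry c)) :
    tdep c γ ≤ ∫⁻ z, ∫⁻ x, c z (x, z.2) ∂(γ.map Prod.fst) ∂γ := by
  set μ := γ.map Prod.fst
  have : IsProbabilityMeasure μ := Measure.isProbabilityMeasure_map measurable_fst.aemeasurable
  let T : (X × Y) × X → (X × Y) × (X × Y) := fun q => (q.1, (q.2, q.1.2))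
  have hT : Measurable T :=
    measurable_fst.prodMk (measurable_snd.prodMk (measurable_snd.comp measurable_fst))
  have hπ₁ : ((γ.prod μ).map T).map Prod.fst = γ := by
    rw [Measure.map_map measurable_fst hT]
    exact Measure.fst_prod
  have hπ₂ : ((γ.prod μ).map T).map Prod.snd = μ.prod (γ.map Prod.snd) := by
    have hswap : Prod.snd ∘ T = Prod.map id Prod.snd ∘ Prod.swap := rfl
    rw [Measure.map_map measurable_snd hT, hswap,
      ← Measure.map_map (measurable_id.prodMap measurable_snd) measurable_swap,
      Measure.prod_swap, ← Measure.map_prod_map _ _ measurable_id measurable_snd,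
      Measure.map_id]
  calc tdep c γ ≤ ∫⁻ p, c p.1 p.2 ∂(γ.prod μ).map T := otCost_le_lintegral c _ hπ₁ hπ₂
    _ = ∫⁻ q, c q.1 (q.2, q.1.2) ∂(γ.prod μ) := lintegral_map hc hT
    _ = ∫⁻ z, ∫⁻ x, c z (x, z.2) ∂μ ∂γ := lintegral_prod _ (hc.comp hT).aemeasurable

end Resampling

lemma lintegral_lintegral_comp_le_diamC {Ω Z : Type*} [MeasurableSpace Ω] [MeasurableSpace Z]
    {f : Ω → Z} (hf : Measurable f) {d c : Z → Z → ℝ≥0∞}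
    (hd : Measurable (Function.uncurry d)) (hdc : ∀ z₁ z₂, d z₁ z₂ ≤ c z₁ z₂)
    (P : Measure Ω) [SFinite P] :
    ∫⁻ ω, ∫⁻ z, d (f ω) z ∂(P.map f) ∂P ≤ diamC c (P.map f) := by
  rw [← lintegral_map (f := fun z₁ => ∫⁻ z₂, d z₁ z₂ ∂P.map f) hd.lintegral_prod_right' hf]
  exact lintegral_mono fun z₁ => lintegral_mono fun z₂ => hdc z₁ z₂

section FibreSup

variable {X Y : Type*} [TopologicalSpace X] [TopologicalSpace Y] {c : X × Y → X × Y → ℝ≥0∞}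

lemma lowerSemicontinuous_iSup_over_fst (hc : LowerSemicontinuous (Function.uncurry c)) :
    LowerSemicontinuous (Function.uncurry fun y₁ y₂ : Y => ⨆ x : X, c (x, y₁) (x, y₂)) :=
  lowerSemicontinuous_iSup fun _ => hc.comp <|
    (continuous_const.prodMk continuous_fst).prodMk (continuous_const.prodMk continuous_snd)

lemma lowerSemicontinuous_iSup_over_snd (hc : LowerSemicontinuous (Function.uncurry c)) :
    LowerSemicontinuous (Function.uncurry fun x₁ x₂ : X => ⨆ y : Y, c (x₁, y) (x₂, y)) :=
  lowerSemicontinuous_iSup fun _ => hc.comp <|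
    (continuous_fst.prodMk continuous_const).prodMk (continuous_snd.prodMk continuous_const)

end FibreSup

theorem tdep_le_diam_marginals_general
    {X Y : Type*} [TopologicalSpace X] [PolishSpace X] [MeasurableSpace X] [BorelSpace X]
    [TopologicalSpace Y] [PolishSpace Y] [MeasurableSpace Y] [BorelSpace Y]
    (c : X × Y → X × Y → ℝ≥0∞)
    (hc_lsc : LowerSemicontinuous (Function.uncurry c))
    (cX : X → X → ℝ≥0∞) (cY : Y → Y → ℝ≥0∞)
    (hcX_bound : ∀ x₁ x₂ y, c (x₁, y) (x₂, y) ≤ cX x₁ x₂)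
    (hcY_bound : ∀ y₁ y₂ x, c (x, y₁) (x, y₂) ≤ cY y₁ y₂)
    (γ : Measure (X × Y)) [IsProbabilityMeasure γ] :
    tdep c γ ≤ diamC cY (γ.map Prod.snd) ∧ tdep c γ ≤ diamC cX (γ.map Prod.fst) := by
  -- second countability makes the Borel σ-algebras of the products the product σ-algebras
  have hc := hc_lsc.measurable
  constructor
  · calc tdep c γ ≤ ∫⁻ z, ∫⁻ y, c z (z.1, y) ∂(γ.map Prod.snd) ∂γ :=
          tdep_le_lintegral_resample_snd γ hc
      _ ≤ ∫⁻ z, ∫⁻ y, ⨆ x, c (x, z.2) (x, y) ∂(γ.map Prod.snd) ∂γ :=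
          lintegral_mono fun z => lintegral_mono fun y =>
            le_iSup (fun x => c (x, z.2) (x, y)) z.1
      _ ≤ diamC cY (γ.map Prod.snd) :=
          lintegral_lintegral_comp_le_diamC measurable_snd
            (lowerSemicontinuous_iSup_over_fst hc_lsc).measurable
            (fun y₁ y₂ => iSup_le (hcY_bound y₁ y₂)) γ
  · calc tdep c γ ≤ ∫⁻ z, ∫⁻ x, c z (x, z.2) ∂(γ.map Prod.fst) ∂γ :=
          tdep_le_lintegral_resample_fst γ hc
      _ ≤ ∫⁻ z, ∫⁻ x, ⨆ y, c (z.1, y) (x, y) ∂(γ.map Prod.fst) ∂γ :=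
          lintegral_mono fun z => lintegral_mono fun x =>
            le_iSup (fun y => c (z.1, y) (x, y)) z.2
      _ ≤ diamC cX (γ.map Prod.fst) :=
          lintegral_lintegral_comp_le_diamC measurable_fst
            (lowerSemicontinuous_iSup_over_snd hc_lsc).measurable
            (fun x₁ x₂ => iSup_le (hcX_bound x₁ x₂)) γ

/-- If the cost `c` on `X × Y` is bounded on vertical and horizontal
fibers by marginal costs `c_X` and `c_Y`, then the transport dependency is bounded by
the `c_Y`-diameter of the second marginal, and symmetrically by the `c_X`-diameter of
the first marginal. -/
theorem tdep_le_diam_marginals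
    {X Y : Type*} [TopologicalSpace X] [PolishSpace X] [MeasurableSpace X] [BorelSpace X]
    [TopologicalSpace Y] [PolishSpace Y] [MeasurableSpace Y] [BorelSpace Y]
    (c : X × Y → X × Y → ℝ≥0∞)
    (hc_lsc : LowerSemicontinuous (Function.uncurry c))
    (hc_symm : ∀ z₁ z₂, c z₁ z₂ = c z₂ z₁)
    (hc_diag : ∀ z, c z z = 0)
    (cX : X → X → ℝ≥0∞) (cY : Y → Y → ℝ≥0∞)
    (hcX_symm : ∀ x₁ x₂, cX x₁ x₂ = cX x₂ x₁)
    (hcY_symm : ∀ y₁ y₂, cY y₁ y₂ = cY y₂ y₁)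
    (hcX_bound : ∀ x₁ x₂ y, c (x₁, y) (x₂, y) ≤ cX x₁ x₂)
    (hcY_bound : ∀ y₁ y₂ x, c (x, y₁) (x, y₂) ≤ cY y₁ y₂)
    (γ : Measure (X × Y)) [IsProbabilityMeasure γ] :
    tdep c γ ≤ diamC cY (γ.map Prod.snd) ∧ tdep c γ ≤ diamC cX (γ.map Prod.fst) :=
  tdep_le_diam_marginals_general c hc_lsc cX cY hcX_bound hcY_bound γ
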